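/- (k-NE tableaux have broken ribbon shape) Let μ ⊆ λ be partitions with n = |λ/μ| ≥ 1, let 1 ≤ k ≤ n, and let T be a standard Young tableau of shape λ/μ having the k-NE property. Then [λ/μ] contains no 2×2 block {(i,j),(i,j+1),(i+1,j),(i+1,j+1)}, i.e., λ/μ is a broken ribbon. -/

import Mathlib

open scoped Classical

noncomputable section

/-- The cells of the skew diagram `lam / mu`. -/
def skewCells (mu lam : YoungDiagram) : Finset (ℕ × ℕ) := lam.cells \ mu.cells

/-- The size `|lam / mu|` of the skew diagram. -/
def skewSize (mu lam : YoungDiagram) : ℕ := (skewCells mu lam).card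

/-- `lam/mu` is a horizontal strip: no vertical domino. -/
def IsHorizontalStrip (mu lam : YoungDiagram) : Prop :=
  ∀ i j : ℕ, ¬((i, j) ∈ skewCells mu lam ∧ (i + 1, j) ∈ skewCells mu lam)

/-- `lam/mu` is a vertical strip: no horizontal domino. -/
def IsVerticalStrip (mu lam : YoungDiagram) : Prop :=
  ∀ i j : ℕ, ¬((i, j) ∈ skewCells mu lam ∧ (i, j + 1) ∈ skewCells mu lam)

/-- `lam/mu` is a broken ribbon: no 2×2 block. -/
def IsBrokenRibbon (mu lam : YoungDiagram) : Prop :=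
  ∀ i j : ℕ, ¬((i, j) ∈ skewCells mu lam ∧ (i, j + 1) ∈ skewCells mu lam ∧
      (i + 1, j) ∈ skewCells mu lam ∧ (i + 1, j + 1) ∈ skewCells mu lam)

/-- Edge-adjacency of lattice cells. -/
def CellAdj (c d : ℕ × ℕ) : Prop :=
  (c.1 = d.1 ∧ (c.2 = d.2 + 1 ∨ d.2 = c.2 + 1)) ∨
  (c.2 = d.2 ∧ (c.1 = d.1 + 1 ∨ d.1 = c.1 + 1))

/-- The setoid relating cells in the same edge-connected component of `S`. -/
def componentSetoid (S : Finset (ℕ × ℕ)) : Setoid {c : ℕ × ℕ // c ∈ S} :=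
  Relation.EqvGen.setoid (fun x y => CellAdj x.1 y.1)

/-- Edge-connected components of a finite set of cells. -/
def SkewComponents (S : Finset (ℕ × ℕ)) : Type := Quotient (componentSetoid S)

/-- The number of edge-connected components of `S`. -/
def ribSet (S : Finset (ℕ × ℕ)) : ℕ := Nat.card (SkewComponents S)

/-- Pairs (component of `S`, index of a nonempty row of that component). -/
def componentRowPairs (S : Finset (ℕ × ℕ)) : Type :=
  {p : SkewComponents S × ℕ //
    ∃ c : {c : ℕ × ℕ // c ∈ S}, Quotient.mk (componentSetoid S) c = p.1 ∧ c.1.1 = p.2}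

/-- Pairs (component of `S`, index of a nonempty column of that component). -/
def componentColPairs (S : Finset (ℕ × ℕ)) : Type :=
  {p : SkewComponents S × ℕ //
    ∃ c : {c : ℕ × ℕ // c ∈ S}, Quotient.mk (componentSetoid S) c = p.1 ∧ c.1.2 = p.2}

/-- Sum over components of (number of nonempty rows − 1). -/
def hgtSet (S : Finset (ℕ × ℕ)) : ℕ := Nat.card (componentRowPairs S) - ribSet S

/-- Sum over components of (number of nonempty columns − 1). -/
def wtSet (S : Finset (ℕ × ℕ)) : ℕ := Nat.card (componentColPairs S) - ribSet S

/-- rib(lam/mu): number of ribbon components of the broken ribbon `lam/mu`. -/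
def rib (mu lam : YoungDiagram) : ℕ := ribSet (skewCells mu lam)

/-- hgt(lam/mu). -/
def hgt (mu lam : YoungDiagram) : ℕ := hgtSet (skewCells mu lam)

/-- wt(lam/mu). -/
def wt (mu lam : YoungDiagram) : ℕ := wtSet (skewCells mu lam)

/-- `lam/mu` is a ribbon: nonempty, no 2×2 block, and edge-connected. -/
def IsRibbon (mu lam : YoungDiagram) : Prop :=
  0 < skewSize mu lam ∧ IsBrokenRibbon mu lam ∧ rib mu lam = 1

/-- A semistandard Young tableau of skew shape `lam/mu`: a filling of the skew cells
with positive integers, weakly increasing along rows, strictly increasing down columns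
(and `0`, i.e. no entry, outside the skew cells). -/
structure SkewSSYT (mu lam : YoungDiagram) where
  entry : ℕ × ℕ → ℕ
  zeros : ∀ c, c ∉ skewCells mu lam → entry c = 0
  pos : ∀ c ∈ skewCells mu lam, 1 ≤ entry c
  rowWeak : ∀ i j, (i, j) ∈ skewCells mu lam → (i, j + 1) ∈ skewCells mu lam →
    entry (i, j) ≤ entry (i, j + 1)
  colStrict : ∀ i j, (i, j) ∈ skewCells mu lam → (i + 1, j) ∈ skewCells mu lam →
    entry (i, j) < entry (i + 1, j)

/-- The number of cells of the tableau `T` with entry `v`. -/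
def countEntry {mu lam : YoungDiagram} (T : SkewSSYT mu lam) (v : ℕ) : ℕ :=
  ((skewCells mu lam).filter (fun c => T.entry c = v)).card

/-- The skew Schur function `s_{lam/mu}`, as a formal power series in variables
`x_1, x_2, …` (variable index `n : ℕ` standing for `x_{n+1}`): the coefficient of
`x_1^(d 0) x_2^(d 1) ⋯` is the number of SSYT of shape `lam/mu` in which entry `i`
occurs exactly `d (i-1)` times. -/
def skewSchur (R : Type*) [CommRing R] (mu lam : YoungDiagram) : MvPowerSeries ℕ R :=
  fun d => (Nat.card {T : SkewSSYT mu lam // ∀ n : ℕ, countEntry T (n + 1) = d n} : R)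

/-- The power sum symmetric function `p_r = x_1^r + x_2^r + ⋯`. -/
def powerSum (R : Type*) [CommRing R] (r : ℕ) : MvPowerSeries ℕ R :=
  fun d => if ∃ n : ℕ, d = Finsupp.single n r then 1 else 0

/-- The quantum power sum `℘_r = ∑_{τ ⊢ r} (-1)^{ℓ(τ)-1} (q-1)^{ℓ(τ)-1} m_τ`,
written coefficientwise: the coefficient at a monomial with exponent vector `d`
of total degree `r` is `(-1)^{ℓ-1} (q-1)^{ℓ-1}` where `ℓ` is the number of
variables occurring in the monomial. -/
def qps (r : ℕ) : MvPowerSeries ℕ (Polynomial ℤ) :=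
  fun d => if (d.sum fun _ v => v) = r then
      (-1 : Polynomial ℤ) ^ (d.support.card - 1) * (Polynomial.X - 1) ^ (d.support.card - 1)
    else 0

/-- The second quantum power sum `p̄_r = ∑_{τ ⊢ r} q^{r-ℓ(τ)} (q-1)^{ℓ(τ)-1} m_τ`. -/
def qps2 (r : ℕ) : MvPowerSeries ℕ (Polynomial ℤ) :=
  fun d => if (d.sum fun _ v => v) = r then
      (Polynomial.X : Polynomial ℤ) ^ (r - d.support.card) *
        (Polynomial.X - 1) ^ (d.support.card - 1)
    else 0

/-- The one-row Young diagram `(r)`. -/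
def rowDiagram (r : ℕ) : YoungDiagram := YoungDiagram.ofRowLens [r] ((List.pairwise_singleton (· ≥ ·) r).sortedGE)

/-- The one-column Young diagram `(1^r)`. -/
def colDiagram (r : ℕ) : YoungDiagram := (rowDiagram r).transpose

theorem sorted_replicate_one (m : ℕ) : List.Pairwise (· ≥ ·) (List.replicate m (1 : ℕ)) := by
  induction m with
  | zero => simp
  | succ n ih =>
    rw [List.replicate_succ, List.pairwise_cons]
    exact ⟨fun b hb => le_of_eq (List.eq_of_mem_replicate hb), ih⟩

/-- The hook Young diagram `(a+1, 1^m)`. -/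
def hookDiagram' (a m : ℕ) : YoungDiagram :=
  YoungDiagram.ofRowLens ((a + 1) :: List.replicate m 1) (by
    rw [List.sortedGE_iff_pairwise, List.pairwise_cons]
    exact ⟨fun b hb => le_trans (le_of_eq (List.eq_of_mem_replicate hb)) (Nat.le_add_left 1 a),
      sorted_replicate_one m⟩)

/-- A standard Young tableau of skew shape `lam/mu` with `n = skewSize mu lam` cells:
a bijective filling of the skew cells with `1, …, n`, strictly increasing along rows
and down columns (and `0` outside the skew cells). -/
structure SkewSYT (mu lam : YoungDiagram) where
  entry : ℕ × ℕ → ℕ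
  zeros : ∀ c, c ∉ skewCells mu lam → entry c = 0
  mem : ∀ c ∈ skewCells mu lam, 1 ≤ entry c ∧ entry c ≤ skewSize mu lam
  bij : ∀ v : ℕ, 1 ≤ v → v ≤ skewSize mu lam → ∃! c, c ∈ skewCells mu lam ∧ entry c = v
  rowStrict : ∀ i j, (i, j) ∈ skewCells mu lam → (i, j + 1) ∈ skewCells mu lam →
    entry (i, j) < entry (i, j + 1)
  colStrict : ∀ i j, (i, j) ∈ skewCells mu lam → (i + 1, j) ∈ skewCells mu lam →
    entry (i, j) < entry (i + 1, j)

/-- The `k`-NE property of a standard Young tableau `T` of shape `lam/mu`: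
(NE1) the rightmost cell of the first nonempty row of the skew diagram has entry `k`;
(NE2) if `i < j < k` then the cell containing `i` is in a strictly smaller column than
the cell containing `j`;
(NE3) if `k < i < j` then the cell containing `i` is in a strictly smaller row than
the cell containing `j`. -/
def HasKNE {mu lam : YoungDiagram} (T : SkewSYT mu lam) (k : ℕ) : Prop :=
  (∀ i j : ℕ, (i, j) ∈ skewCells mu lam → (∀ c ∈ skewCells mu lam, i ≤ c.1) →
      (∀ j' : ℕ, (i, j') ∈ skewCells mu lam → j' ≤ j) → T.entry (i, j) = k) ∧
  (∀ c ∈ skewCells mu lam, ∀ d ∈ skewCells mu lam,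
      T.entry c < T.entry d → T.entry d < k → c.2 < d.2) ∧
  (∀ c ∈ skewCells mu lam, ∀ d ∈ skewCells mu lam,
      k < T.entry c → T.entry c < T.entry d → c.1 < d.1)

/-!
Let `v` be the entry of the lower left cell of a 2×2 block. The column it shares with the
cell above forbids `v < k` by (NE2), the row it shares with the cell to its right forbids
`v > k` by (NE3). So `v = k`, but by (NE1) the entry `k` sits in the top nonempty row,
which lies above the block.
-/

theorem exists_top_right_cell {S : Finset (ℕ × ℕ)} (hS : S.Nonempty) :
    ∃ c ∈ S, (∀ d ∈ S, c.1 ≤ d.1) ∧ ∀ d ∈ S, d.1 = c.1 → d.2 ≤ c.2 := by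
  obtain ⟨a, ha, hmin⟩ := S.exists_min_image Prod.fst hS
  obtain ⟨c, hc, hmax⟩ := (S.filter (·.1 = a.1)).exists_max_image Prod.snd
    ⟨a, Finset.mem_filter.mpr ⟨ha, rfl⟩⟩
  obtain ⟨hcS, hca⟩ := Finset.mem_filter.mp hc
  refine ⟨c, hcS, fun d hd => hca ▸ hmin d hd, fun d hd hdc => ?_⟩
  exact hmax d (Finset.mem_filter.mpr ⟨hd, hdc.trans hca⟩)

theorem SkewSYT.injOn_entry {mu lam : YoungDiagram} (T : SkewSYT mu lam) :
    Set.InjOn T.entry (skewCells mu lam) := by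
  intro c hc d hd hcd
  obtain ⟨_, -, huniq⟩ := T.bij _ (T.mem c hc).1 (T.mem c hc).2
  exact (huniq c ⟨hc, rfl⟩).trans (huniq d ⟨hd, hcd.symm⟩).symm

namespace HasKNE

variable {mu lam : YoungDiagram} {T : SkewSYT mu lam} {k : ℕ}

theorem le_entry_of_vertical_domino (hT : HasKNE T k) {i j : ℕ}
    (hup : (i, j) ∈ skewCells mu lam) (hdown : (i + 1, j) ∈ skewCells mu lam) :
    k ≤ T.entry (i + 1, j) := by
  by_contra! hlt
  exact lt_irrefl j (hT.2.1 _ hup _ hdown (T.colStrict i j hup hdown) hlt)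

theorem entry_le_of_horizontal_domino (hT : HasKNE T k) {i j : ℕ}
    (hleft : (i, j) ∈ skewCells mu lam) (hright : (i, j + 1) ∈ skewCells mu lam) :
    T.entry (i, j) ≤ k := by
  by_contra! hgt
  exact lt_irrefl i (hT.2.2 _ hleft _ hright hgt (T.rowStrict i j hleft hright))

theorem row_le_of_entry_eq (hT : HasKNE T k) {c d : ℕ × ℕ}
    (hc : c ∈ skewCells mu lam) (hck : T.entry c = k) (hd : d ∈ skewCells mu lam) :
    c.1 ≤ d.1 := by
  obtain ⟨t, ht, htop, hright⟩ := exists_top_right_cell ⟨c, hc⟩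
  have htk : T.entry (t.1, t.2) = k := hT.1 t.1 t.2 ht htop fun j' hj' => hright _ hj' rfl
  have htc : t = c := T.injOn_entry ht hc (htk.trans hck.symm)
  exact htc ▸ htop d hd

end HasKNE

theorem kNE_shape_is_broken_ribbon_general
    (mu lam : YoungDiagram) (k : ℕ)
    (T : SkewSYT mu lam) (hT : HasKNE T k) :
    IsBrokenRibbon mu lam := by
  rintro i j ⟨hup, -, hdown, hright⟩
  have hk : T.entry (i + 1, j) = k :=
    le_antisymm (hT.entry_le_of_horizontal_domino hdown hright)
      (hT.le_entry_of_vertical_domino hup hdown)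
  exact absurd (hT.row_le_of_entry_eq hdown hk hup) (Nat.not_succ_le_self i)

/-- **k-NE tableaux have broken ribbon shape.** -/
theorem kNE_shape_is_broken_ribbon
    (mu lam : YoungDiagram) (hml : mu ≤ lam) (k : ℕ)
    (hk1 : 1 ≤ k) (hk2 : k ≤ skewSize mu lam)
    (T : SkewSYT mu lam) (hT : HasKNE T k) :
    IsBrokenRibbon mu lam :=
  kNE_shape_is_broken_ribbon_general mu lam k T hT
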